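/- Let b̄ ∈ dom F and let x¹, x² ∈ bd F(b̄) satisfy T(x¹) ⊆ T(x²), where T(x) := {t ∈ T : a_t'x = b̄_t} is the set of active indices. Then end( conv{a_t : t ∈ T(x¹)} ) ⊆ end( conv{a_t : t ∈ T(x²)} ). (By Valadier's formula, conv{a_t : t ∈ T(xⁱ)} is the convex subdifferential ∂f_{b̄}(xⁱ) of f_{b̄}(x) := sup_{t∈T}(a_t'x − b̄_t) at the boundary point xⁱ.) -/

import Mathlib

open Filter Set
open scoped Topology

/-- The feasible set `F(b) = {x ∈ ℝⁿ : aₜ'x ≤ bₜ for all t ∈ T}`. -/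
def feas {n : ℕ} {T : Type*} [TopologicalSpace T]
    (a : T → (Fin n → ℝ)) (b : C(T, ℝ)) : Set (Fin n → ℝ) :=
  {x | ∀ t : T, (∑ i, a t i * x i) ≤ b t}

/-- The set of active indices `T(x) = {t ∈ T : a_t'x = b̄_t}` at a point `x`. -/
def activeIdx {n : ℕ} {T : Type*} [TopologicalSpace T]
    (a : T → (Fin n → ℝ)) (bbar : C(T, ℝ)) (x : Fin n → ℝ) : Set T :=
  {t : T | (∑ i, a t i * x i) = bbar t}

/-- The end set of a convex set `C ⊆ ℝⁿ`:
`end C = {u ∈ cl C : no μ > 1 satisfies μ·u ∈ cl C}`. -/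
def endSet {n : ℕ} (C : Set (Fin n → ℝ)) : Set (Fin n → ℝ) :=
  {u ∈ closure C | ¬ ∃ μ : ℝ, 1 < μ ∧ μ • u ∈ closure C}

/-- Convex hull of a compact set in `Fin n → ℝ` is compact (via Carathéodory). -/
lemma isCompact_convexHull_aux {n : ℕ} {s : Set (Fin n → ℝ)} (hs : IsCompact s) :
    IsCompact (convexHull ℝ s) := by
  set F : Fin (n + 2) → Set (Fin n → ℝ) := fun m =>
    (fun p : (Fin (m : ℕ) → ℝ) × (Fin (m : ℕ) → Fin n → ℝ) => ∑ i, p.1 i • p.2 i) ''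
      (stdSimplex ℝ (Fin (m : ℕ)) ×ˢ Set.univ.pi fun _ => s) with hF
  have key : convexHull ℝ s = ⋃ m : Fin (n + 2), F m := by
    apply Set.Subset.antisymm
    · intro x hx
      rw [convexHull_eq_union] at hx
      simp only [Set.mem_iUnion] at hx
      obtain ⟨t, hts, hind, hxt⟩ := hx
      have hcard : t.card ≤ n + 1 := by
        have h1 := hind.card_le_finrank_succ
        have h2 := Submodule.finrank_le (vectorSpan ℝ (Set.range (Subtype.val : t → Fin n → ℝ)))
        rw [Fintype.card_coe] at h1
        rw [Module.finrank_fin_fun] at h2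
        omega
      rw [Finset.convexHull_eq] at hxt
      obtain ⟨w, hw0, hw1, hwx⟩ := hxt
      rw [Finset.centerMass_eq_of_sum_1 _ _ hw1] at hwx
      simp only [id] at hwx
      let e : Fin t.card ≃ t := t.equivFin.symm
      have hsum1 : ∑ j : Fin t.card, w (e j) = 1 := by
        rw [Equiv.sum_comp e (fun y : {x // x ∈ t} => w ↑y), Finset.sum_coe_sort t w, hw1]
      have hsum2 : ∑ j : Fin t.card, w (e j) • (e j : Fin n → ℝ) = x := by
        rw [Equiv.sum_comp e (fun y : {x // x ∈ t} => w ↑y • (y : Fin n → ℝ)),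
          Finset.sum_coe_sort t (fun y => w y • y), hwx]
      exact Set.mem_iUnion.2 ⟨⟨t.card, by omega⟩,
        ⟨(fun j => w (e j), fun j => (e j : Fin n → ℝ)),
          ⟨⟨fun j => hw0 _ (e j).2, hsum1⟩, fun j _ => hts (e j).2⟩, hsum2⟩⟩
    · refine Set.iUnion_subset fun m => ?_
      rintro x ⟨⟨w, z⟩, ⟨hw, hz⟩, rfl⟩
      exact (convex_convexHull ℝ s).sum_mem (fun i _ => hw.1 i) hw.2
        (fun i _ => subset_convexHull ℝ s (hz i trivial))
  rw [key]
  refine isCompact_iUnion fun m => ?_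
  exact ((isCompact_stdSimplex _ _).prod (isCompact_univ_pi fun _ => hs)).image <| by
    refine continuous_finset_sum _ fun i _ => ?_
    exact ((continuous_apply i).comp continuous_fst).smul
      ((continuous_apply i).comp continuous_snd)

/-- A face of a convex hull cut out by a linear functional. -/
lemma face_convexHull_aux {n : ℕ} (s : Set (Fin n → ℝ)) (L : (Fin n → ℝ) →ₗ[ℝ] ℝ)
    (hs : ∀ z ∈ s, L z ≤ 0) {v : Fin n → ℝ} (hv : v ∈ convexHull ℝ s) (hv0 : L v = 0) :
    v ∈ convexHull ℝ {z | z ∈ s ∧ L z = 0} := by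
  rw [convexHull_eq] at hv
  obtain ⟨ι, t, w, z, hw0, hw1, hz, hvc⟩ := hv
  rw [Finset.centerMass_eq_of_sum_1 _ _ hw1] at hvc
  classical
  have hLsum : ∑ i ∈ t, w i * L (z i) = 0 := by
    have : L (∑ i ∈ t, w i • z i) = 0 := by rw [hvc, hv0]
    rw [map_sum] at this
    simpa [smul_eq_mul] using this
  have hterm : ∀ i ∈ t, w i * L (z i) = 0 := by
    rw [Finset.sum_eq_zero_iff_of_nonpos
      (fun i hi => mul_nonpos_of_nonneg_of_nonpos (hw0 i hi) (hs _ (hz i hi)))] at hLsum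
    exact hLsum
  have hvc' : (t.filter fun i => w i ≠ 0).centerMass w z = v := by
    rw [Finset.centerMass_eq_of_sum_1]
    · rw [← hvc]
      refine Finset.sum_subset (Finset.filter_subset _ _) fun i hi hni => ?_
      have : w i = 0 := by
        by_contra h
        exact hni (Finset.mem_filter.2 ⟨hi, h⟩)
      simp [this]
    · rw [Finset.sum_filter_ne_zero]; exact hw1
  rw [← hvc']
  refine Finset.centerMass_mem_convexHull _ (fun i hi => hw0 i (Finset.mem_filter.1 hi).1) ?_ ?_
  · rw [Finset.sum_filter_ne_zero, hw1]; exact one_pos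
  · intro i hi
    obtain ⟨hit, hwi⟩ := Finset.mem_filter.1 hi
    refine ⟨hz i hit, ?_⟩
    have := hterm i hit
    rcases mul_eq_zero.1 this with h | h
    · exact absurd h hwi
    · exact h

/-- Proposition `Prop_2` (i). Let `b̄ ∈ dom F` and
`x¹, x² ∈ bd F(b̄)` with `T(x¹) ⊆ T(x²)`. Then
`end(conv{a_t : t ∈ T(x¹)}) ⊆ end(conv{a_t : t ∈ T(x²)})`.
(By Valadier's formula these convex hulls are the subdifferentials `∂f_{b̄}(xⁱ)`.) -/
theorem endSet_subdifferential_mono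
    {n : ℕ} {T : Type*} [MetricSpace T] [CompactSpace T]
    (a : T → (Fin n → ℝ)) (ha : Continuous a)
    (bbar : C(T, ℝ)) (hdom : (feas a bbar).Nonempty)
    (x1 x2 : Fin n → ℝ)
    (hx1 : x1 ∈ frontier (feas a bbar)) (hx2 : x2 ∈ frontier (feas a bbar))
    (hsub : activeIdx a bbar x1 ⊆ activeIdx a bbar x2) :
    endSet (convexHull ℝ (a '' activeIdx a bbar x1)) ⊆
      endSet (convexHull ℝ (a '' activeIdx a bbar x2)) := by
  -- The feasible set is closed, so frontier points are feasible.
  have hfeas_closed : IsClosed (feas a bbar) := by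
    have : feas a bbar = ⋂ t : T, {x : Fin n → ℝ | (∑ i, a t i * x i) ≤ bbar t} := by
      ext x; simp [feas, Set.mem_iInter]
    rw [this]
    refine isClosed_iInter fun t => isClosed_le ?_ continuous_const
    exact continuous_finset_sum _ fun i _ => (continuous_const.mul (continuous_apply i))
  have hx1f : x1 ∈ feas a bbar := hfeas_closed.closure_eq ▸ hx1.1
  have hx2f : x2 ∈ feas a bbar := hfeas_closed.closure_eq ▸ hx2.1
  -- compactness of the two hulls
  have hcompact : ∀ x : Fin n → ℝ, IsCompact (convexHull ℝ (a '' activeIdx a bbar x)) := by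
    intro x
    refine isCompact_convexHull_aux (IsCompact.image ?_ ha)
    refine IsClosed.isCompact ?_
    refine isClosed_eq ?_ bbar.continuous
    exact continuous_finset_sum _ fun i _ => ((continuous_apply i).comp ha).mul continuous_const
  set C1 := convexHull ℝ (a '' activeIdx a bbar x1) with hC1
  set C2 := convexHull ℝ (a '' activeIdx a bbar x2) with hC2
  have hcl1 : closure C1 = C1 := ((hcompact x1).isClosed).closure_eq
  have hcl2 : closure C2 = C2 := ((hcompact x2).isClosed).closure_eq
  have hC12 : C1 ⊆ C2 := convexHull_mono (Set.image_mono hsub)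
  -- The separating linear functional  L v = ⟪v, x1 - x2⟫
  set L : (Fin n → ℝ) →ₗ[ℝ] ℝ :=
    { toFun := fun v => ∑ i, v i * (x1 i - x2 i)
      map_add' := by
        intro u v
        simp only [Pi.add_apply, add_mul, Finset.sum_add_distrib]
      map_smul' := by
        intro c v
        simp only [Pi.smul_apply, smul_eq_mul, RingHom.id_apply, Finset.mul_sum, mul_assoc] } with hL
  have hLat : ∀ t : T, L (a t) = (∑ i, a t i * x1 i) - (∑ i, a t i * x2 i) := by
    intro t
    simp only [hL, LinearMap.coe_mk, AddHom.coe_mk, mul_sub, Finset.sum_sub_distrib]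
  -- L ≤ 0 on a '' T(x2)
  have hLle : ∀ z ∈ a '' activeIdx a bbar x2, L z ≤ 0 := by
    rintro _ ⟨t, ht, rfl⟩
    rw [hLat t, ht]
    have := hx1f t
    linarith
  -- L = 0 on a '' T(x1)
  have hLzero : ∀ z ∈ a '' activeIdx a bbar x1, L z = 0 := by
    rintro _ ⟨t, ht, rfl⟩
    rw [hLat t, ht, (hsub ht : (∑ i, a t i * x2 i) = bbar t)]
    ring
  -- hence L = 0 on C1
  have hLC1 : ∀ v ∈ C1, L v = 0 := by
    intro v hv
    have : C1 ⊆ {v | L v = 0} := by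
      rw [hC1]
      refine convexHull_min hLzero ?_
      intro p hp q hq α β hα hβ hαβ
      simp only [Set.mem_setOf_eq] at hp hq ⊢
      rw [L.map_add, L.map_smul, L.map_smul, hp, hq, smul_eq_mul, smul_eq_mul]
      ring
    exact this hv
  -- the face of C2 where L = 0 is contained in C1
  have hface : ∀ v ∈ C2, L v = 0 → v ∈ C1 := by
    intro v hv hv0
    have := face_convexHull_aux _ L hLle hv hv0
    refine convexHull_mono ?_ this
    rintro z ⟨⟨t, ht, rfl⟩, hz0⟩
    refine ⟨t, ?_, rfl⟩
    have h2 : (∑ i, a t i * x2 i) = bbar t := ht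
    rw [hLat t, h2] at hz0
    show (∑ i, a t i * x1 i) = bbar t
    linarith
  -- Main argument
  rintro u ⟨hu1, hu2⟩
  have huC1 : u ∈ C1 := hcl1 ▸ hu1
  constructor
  · rw [hcl2]; exact hC12 huC1
  · rintro ⟨μ, hμ, hμu⟩
    rw [hcl2] at hμu
    have hLu : L u = 0 := hLC1 u huC1
    have hLμu : L (μ • u) = 0 := by rw [L.map_smul, hLu, smul_eq_mul, mul_zero]
    have : μ • u ∈ C1 := hface _ hμu hLμu
    exact hu2 ⟨μ, hμ, by rw [hcl1]; exact this⟩
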